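/- arXiv:1403.6800 — 4 statements merged into one kernel-verified Lean document; each statement's English description precedes it below -/
import Mathlib

section
/- For every integer $k$, $S_k(t)^3 - 3 S_k(t) S_{k-1}(t)^2 + t\, S_{k-1}(t)^3 = S_{3k}(t)$ as polynomials. -/
/-!
The recurrence with its two initial values determines `S`, so `S` is Mathlib's rescaled Chebyshev
polynomial `Chebyshev.S`. These satisfy the addition formula `S (m + n) = S m S n - S (m-1) S (n-1)`;
applying it to `3k = 2k + k`, `2k = k + k` and `2k - 1 = k + (k - 1)` and eliminating `S (k - 2)`
with the recurrence gives the identity.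
-/

open Polynomial

namespace Polynomial.Chebyshev

variable (R : Type*) [CommRing R]

theorem S_add (m n : ℤ) : S R (m + n) = S R m * S R n - S R (m - 1) * S R (n - 1) := by
  induction n using Chebyshev.induct with
  | zero => simp [S_neg_one]
  | one => simp [S_add_one, mul_comm]
  | add_two n ih₁ ih₀ =>
    have h := S_add_two R (m + n)
    rw [add_assoc, add_assoc, ih₀, ih₁, add_sub_cancel_right] at h
    rw [h, show (n : ℤ) + 2 - 1 = n + 1 by ring]
    linear_combination S R (m - 1) * S_add_one R n - S R m * S_add_two R n
  | neg_add_one n ih₀ ih₁ =>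
    have h := S_sub_one R (m + -n)
    rw [add_sub_assoc, add_assoc, ih₀, ih₁, add_sub_cancel_right] at h
    have h' := S_sub_one R (-n - 1)
    rw [sub_add_cancel] at h'
    rw [h]
    linear_combination S R (m - 1) * h' - S R m * S_sub_one R (-n)

theorem S_three_mul (k : ℤ) :
    S R (3 * k) = S R k ^ 3 - 3 * S R k * S R (k - 1) ^ 2 + X * S R (k - 1) ^ 3 := by
  have h_two_mul : S R (k + k) = S R k ^ 2 - S R (k - 1) ^ 2 := by rw [S_add]; ring
  have h_two_mul_sub_one :
      S R (k + k - 1) = S R k * S R (k - 1) - S R (k - 1) * S R (k - 2) := by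
    rw [add_sub_assoc, S_add, sub_sub, one_add_one_eq_two]
  rw [show 3 * k = k + k + k by ring, S_add, h_two_mul, h_two_mul_sub_one, S_sub_two]
  ring

theorem eq_S_of_recurrence {s : ℤ → R[X]} (h0 : s 0 = 1) (h1 : s 1 = X)
    (hs : ∀ k, s (k + 1) = X * s k - s (k - 1)) : s = S R := by
  funext k
  induction k using Chebyshev.induct with
  | zero => rw [h0, S_zero]
  | one => rw [h1, S_one]
  | add_two n ih₁ ih₀ =>
    rw [S_add_two, ← ih₁, ← ih₀, show (n : ℤ) + 2 = n + 1 + 1 by ring, hs, add_sub_cancel_right]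
  | neg_add_one n ih₀ ih₁ => rw [S_sub_one, ← ih₀, ← ih₁, hs, sub_sub_cancel]

end Polynomial.Chebyshev

theorem stmt_8 (S : ℤ → Polynomial ℂ) (hS0 : S 0 = 1) (hS1 : S 1 = Polynomial.X)
    (hS : ∀ k : ℤ, S (k + 1) = Polynomial.X * S k - S (k - 1)) :
    ∀ k : ℤ, (S k) ^ 3 - 3 * S k * (S (k - 1)) ^ 2 + Polynomial.X * (S (k - 1)) ^ 3
      = S (3 * k) := by
  rw [Chebyshev.eq_S_of_recurrence ℂ hS0 hS1 hS]
  exact fun k => (Chebyshev.S_three_mul ℂ k).symm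
end

section
/- For any complex number $\delta$, the polynomial $x^2 + y^2 + z^2 - xyz + \delta$ is irreducible in $\mathbb{C}[x,y,z]$. -/
open MvPolynomial Polynomial in
theorem key15 (δ : ℂ) : ∀ a b : MvPolynomial (Fin 2) ℂ,
      (X 0)^2 + (X 1)^2 + MvPolynomial.C δ = a * b → -(X 0 * X 1) = a + b → False := by
    intro a b hmul hadd
    set q := a - b with hq
    have hsq : q ^ 2 = (X 0)^2 * (X 1)^2 - 4 * (X 0)^2 - 4 * (X 1)^2
        - 4 * MvPolynomial.C δ := by
      have : q ^ 2 = (a + b)^2 - 4 * (a * b) := by ring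
      rw [this, ← hadd, ← hmul]; ring
    set e2 := finSuccEquiv ℂ 1 with he2
    have h0 : e2 (X 0) = Polynomial.X := finSuccEquiv_X_zero
    have h1 : e2 (X 1) = Polynomial.C (X 0) := by
      have : (1 : Fin 2) = Fin.succ 0 := by decide
      rw [this]; exact finSuccEquiv_X_succ
    have hC : ∀ c : ℂ, e2 (MvPolynomial.C c) = Polynomial.C (MvPolynomial.C c) := by
      intro c; simp [he2, finSuccEquiv_apply]
    have hr : (e2 q) ^ 2 = Polynomial.C ((X 0)^2 - 4) * Polynomial.X ^ 2
        + Polynomial.C (-(4 * (X 0)^2) - 4 * MvPolynomial.C δ) := by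
      rw [← map_pow, hsq]
      simp only [map_sub, map_mul, map_add, map_pow, map_ofNat, map_neg, h0, h1, hC]
      ring
    set r := e2 q with hrdef
    have hC1 : ((X 0)^2 - 4 : MvPolynomial (Fin 1) ℂ) ≠ 0 := by
      intro h
      have := congrArg (MvPolynomial.eval (fun _ => (0:ℂ))) h
      simp only [map_sub, map_pow, map_ofNat, MvPolynomial.eval_X, map_zero] at this
      norm_num at this
    have hnd : r.natDegree = 1 := by
      have hnd2 : (r ^ 2).natDegree = 2 := by
        have : r ^ 2 = Polynomial.C ((X 0)^2 - 4) * Polynomial.X ^ 2 + Polynomial.C 0 * Polynomial.X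
            + Polynomial.C (-(4 * (X 0)^2) - 4 * MvPolynomial.C δ) := by
          rw [hr, Polynomial.C_0]; ring
        rw [this]; exact natDegree_quadratic hC1
      rw [natDegree_pow] at hnd2; omega
    have hrX : r = Polynomial.C (r.coeff 1) * Polynomial.X + Polynomial.C (r.coeff 0) :=
      eq_X_add_C_of_natDegree_le_one (le_of_eq hnd)
    set u := r.coeff 1 with hu
    set v := r.coeff 0 with hv
    have hexp : r ^ 2 = Polynomial.C (u^2) * Polynomial.X ^ 2
        + Polynomial.C (2*u*v) * Polynomial.X + Polynomial.C (v^2) := by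
      rw [hrX]
      simp only [map_mul, map_pow, map_ofNat]
      ring
    rw [hexp] at hr
    have c2 : u ^ 2 = (X 0)^2 - 4 := by
      have h' := congrArg (fun p => Polynomial.coeff p 2) hr
      simp only [Polynomial.coeff_add, Polynomial.coeff_C_mul, Polynomial.coeff_X_pow,
        Polynomial.coeff_X, Polynomial.coeff_C] at h'
      norm_num at h'
      exact h'
    have c1 : u = 0 ∨ v = 0 := by
      have h' := congrArg (fun p => Polynomial.coeff p 1) hr
      simp only [Polynomial.coeff_add, Polynomial.coeff_C_mul, Polynomial.coeff_X_pow,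
        Polynomial.coeff_X, Polynomial.coeff_C] at h'
      norm_num at h'
      exact h'
    have c0 : v ^ 2 = -(4 * (X 0)^2) - 4 * MvPolynomial.C δ := by
      have h' := congrArg (fun p => Polynomial.coeff p 0) hr
      simp only [Polynomial.coeff_add, Polynomial.coeff_C_mul, Polynomial.coeff_X_pow,
        Polynomial.coeff_X, Polynomial.coeff_C] at h'
      norm_num at h'
      exact h'
    rcases c1 with h | h
    · rw [h] at c2
      have := congrArg (MvPolynomial.eval (fun _ => (0:ℂ))) c2
      simp only [map_sub, map_pow, map_ofNat, MvPolynomial.eval_X, map_zero] at this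
      norm_num at this
    · rw [h] at c0
      have e0 := congrArg (MvPolynomial.eval (fun _ => (0:ℂ))) c0
      have e1 := congrArg (MvPolynomial.eval (fun _ => (1:ℂ))) c0
      simp only [map_sub, map_neg, map_mul, map_pow, map_ofNat, MvPolynomial.eval_X,
        MvPolynomial.eval_C, map_zero] at e0 e1
      norm_num at e0 e1
      rw [e0] at e1
      norm_num at e1

open MvPolynomial in
theorem stmt_15 (δ : ℂ) :
    Irreducible ((X 0) ^ 2 + (X 1) ^ 2 + (X 2) ^ 2 - X 0 * X 1 * X 2 + C δ :
      MvPolynomial (Fin 3) ℂ) := by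
  set e := finSuccEquiv ℂ 2 with he
  rw [← MulEquiv.irreducible_iff e]
  have h0 : e (X 0) = Polynomial.X := finSuccEquiv_X_zero
  have h1 : e (X 1) = Polynomial.C (X 0) := by
    have : (1 : Fin 3) = Fin.succ 0 := by decide
    rw [this]; exact finSuccEquiv_X_succ
  have h2 : e (X 2) = Polynomial.C (X 1) := by
    have : (2 : Fin 3) = Fin.succ 1 := by decide
    rw [this]; exact finSuccEquiv_X_succ
  have hC : e (C δ) = Polynomial.C (C δ) := by simp [he, finSuccEquiv_apply]
  have hmap : e ((X 0) ^ 2 + (X 1) ^ 2 + (X 2) ^ 2 - X 0 * X 1 * X 2 + C δ)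
      = Polynomial.X ^ 2 + Polynomial.C (-(X 0 * X 1)) * Polynomial.X
        + Polynomial.C ((X 0)^2 + (X 1)^2 + C δ) := by
    simp only [map_add, map_sub, map_mul, map_pow, h0, h1, h2, hC, map_neg]
    ring
  rw [hmap]
  set P : Polynomial (MvPolynomial (Fin 2) ℂ) :=
    Polynomial.X ^ 2 + Polynomial.C (-(X 0 * X 1)) * Polynomial.X
      + Polynomial.C ((X 0)^2 + (X 1)^2 + C δ) with hP
  have hmonic : P.Monic := by
    have : P = Polynomial.X ^ 2 + (Polynomial.C (-(X 0 * X 1)) * Polynomial.X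
        + Polynomial.C ((X 0)^2 + (X 1)^2 + C δ)) := by rw [hP]; ring
    rw [this]
    refine Polynomial.monic_X_pow_add ?_
    refine lt_of_le_of_lt (Polynomial.degree_linear_le) ?_
    decide
  have hnd : P.natDegree = 2 := by
    have : P = Polynomial.C 1 * Polynomial.X ^ 2 + Polynomial.C (-(X 0 * X 1)) * Polynomial.X
        + Polynomial.C ((X 0)^2 + (X 1)^2 + C δ) := by rw [hP]; simp
    rw [this]
    exact Polynomial.natDegree_quadratic one_ne_zero
  by_contra hcon
  obtain ⟨c₁, c₂, hc0, hc1⟩ :=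
    (hmonic.not_irreducible_iff_exists_add_mul_eq_coeff hnd).mp hcon
  have e0 : P.coeff 0 = (X 0)^2 + (X 1)^2 + C δ := by
    rw [hP]
    simp only [Polynomial.coeff_add, Polynomial.coeff_C_mul, Polynomial.coeff_X_pow,
      Polynomial.coeff_X, Polynomial.coeff_C]
    norm_num
  have e1 : P.coeff 1 = -(X 0 * X 1) := by
    rw [hP]
    simp only [Polynomial.coeff_add, Polynomial.coeff_C_mul, Polynomial.coeff_X_pow,
      Polynomial.coeff_X, Polynomial.coeff_C]
    norm_num
  rw [e0] at hc0
  rw [e1] at hc1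
  exact key15 δ c₁ c₂ hc0 hc1
end

section
/- For any complex number $\delta$, the polynomial $xyz - y^2 - z^2 + \delta$ is irreducible in $\mathbb{C}[x,y,z]$. -/
/-!
As a polynomial in `x = X 0` it reads `y z · x + (δ - y² - z²)`, linear in `x`
over the UFD `ℂ[y, z]`. Such a polynomial is irreducible as soon as its two coefficients are
coprime, and they are: the only prime factors of `y z` are `y` and `z`, and neither divides
`δ - y² - z²`, which has the monomials `z²` and `y²`.
-/

open MvPolynomial

theorem MvPolynomial.coeff_eq_zero_of_X_dvd {R σ : Type*} [CommSemiring R] {i : σ}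
    {p : MvPolynomial σ R} (h : X i ∣ p) {m : σ →₀ ℕ} (hm : m i = 0) : coeff m p = 0 := by
  classical
  obtain ⟨q, rfl⟩ := h
  simp [coeff_X_mul', hm]

lemma not_X_dvd_C_sub_sq_sub_sq (δ : ℂ) (i : Fin 2) :
    ¬ (X i : MvPolynomial (Fin 2) ℂ) ∣ C δ - X 0 ^ 2 - X 1 ^ 2 := by
  intro h
  have hcoeff (j : Fin 2) : coeff (Finsupp.single j 2) (C δ - X 0 ^ 2 - X 1 ^ 2) = -1 := by
    fin_cases j <;> simp [coeff_X_pow, coeff_C, Finsupp.single_eq_single_iff,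
      eq_comm (a := (0 : Fin 2 →₀ ℕ))]
  have := coeff_eq_zero_of_X_dvd h (m := Finsupp.single (i + 1) 2) (by fin_cases i <;> simp)
  simp [hcoeff] at this

lemma isRelPrime_X_zero_mul_X_one_C_sub_sq_sub_sq (δ : ℂ) :
    IsRelPrime (X 0 * X 1 : MvPolynomial (Fin 2) ℂ) (C δ - X 0 ^ 2 - X 1 ^ 2) := by
  have hX (i : Fin 2) : IsRelPrime (X i : MvPolynomial (Fin 2) ℂ) (C δ - X 0 ^ 2 - X 1 ^ 2) :=
    X_prime.irreducible.isRelPrime_iff_not_dvd.mpr (not_X_dvd_C_sub_sq_sub_sq δ i)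
  exact (hX 0).mul_left (hX 1)

lemma finSuccEquiv_X_mul_X_mul_X_sub_sq_sub_sq_add_C (δ : ℂ) :
    finSuccEquiv ℂ 2 (X 0 * X 1 * X 2 - X 1 ^ 2 - X 2 ^ 2 + C δ) =
      Polynomial.C (X 0 * X 1) * Polynomial.X + Polynomial.C (C δ - X 0 ^ 2 - X 1 ^ 2) := by
  have h1 : finSuccEquiv ℂ 2 (X 1) = Polynomial.C (X 0) := finSuccEquiv_X_succ (j := 0)
  have h2 : finSuccEquiv ℂ 2 (X 2) = Polynomial.C (X 1) := finSuccEquiv_X_succ (j := 1)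
  have hC : finSuccEquiv ℂ 2 (C δ) = Polynomial.C (C δ) := (finSuccEquiv ℂ 2).commutes δ
  simp only [map_add, map_sub, map_mul, map_pow, finSuccEquiv_X_zero, h1, h2, hC]
  ring

open MvPolynomial in
theorem stmt_16 (δ : ℂ) :
    Irreducible (X 0 * X 1 * X 2 - (X 1) ^ 2 - (X 2) ^ 2 + C δ :
      MvPolynomial (Fin 3) ℂ) := by
  rw [← MulEquiv.irreducible_iff (finSuccEquiv ℂ 2).toMulEquiv]
  change Irreducible (finSuccEquiv ℂ 2 _)
  rw [finSuccEquiv_X_mul_X_mul_X_sub_sq_sub_sq_add_C]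
  exact Polynomial.irreducible_C_mul_X_add_C (mul_ne_zero (X_ne_zero 0) (X_ne_zero 1))
    (isRelPrime_X_zero_mul_X_one_C_sub_sq_sub_sq δ)
end

section
/- Let $n \geq 1$ be an integer and let $R(x,y) = (x^2-y^2)\big(S_{n-1}(\delta) - S_{n-2}(\delta)\big) - 2\big(S_n(\delta) - S_{n-2}(\delta)\big) \in \mathbb{C}[x,y]$, where $\delta = 4y^2+2$ and $S_k$ are the Chebyshev polynomials with $S_0=1$, $S_1(t)=t$, $S_{k+1}(t)=tS_k(t)-S_{k-1}(t)$. Then $R$ is irreducible in $\mathbb{C}[x,y]$. -/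
/-!
In `ℂ[y][x]` the polynomial is `a x² - c` with `a = A(δ)` and `c = a y² + 2 Cₙ(δ)`, where
`A = S_{n-1} - S_{n-2}` and `S_n - S_{n-2} = Cₙ` is the Vieta–Lucas polynomial. Over a domain,
`a x² - c` with relatively prime `a, c` can only factor into two linear factors, which forces
`a c` to be a square.

Substituting `t = z + z⁻¹` gives `(z + 1) A(t) = zⁿ + z¹⁻ⁿ` and `Cₙ(t) = zⁿ + z⁻ⁿ`. Hence `A` and
`Cₙ` have no common root, and differentiating the first identity shows that every root of `A` is
simple. For `n ≥ 2`, `A` has a root `t₀ = δ(y₀)` with `y₀ ≠ 0`, which is then a simple root of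
`a c`; for `n = 1`, `a c = 9 y² + 4`. Either way `a c` is not a square.
-/

open Polynomial Topology

theorem IsAlgClosed.exists_ne_zero_add_inv_eq {K : Type*} [Field K] [IsAlgClosed K] (t : K) :
    ∃ z ≠ 0, z + z⁻¹ = t := by
  have hdeg : (X ^ 2 - C t * X + 1 : K[X]).degree = 2 := by compute_degree!
  obtain ⟨z, hz⟩ := IsAlgClosed.exists_root _ (by rw [hdeg]; exact two_ne_zero)
  have hz' : z ^ 2 - t * z + 1 = 0 := by simpa using hz
  have hz0 : z ≠ 0 := by rintro rfl; simp at hz'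
  exact ⟨z, hz0, by field_simp; linear_combination hz'⟩

namespace Polynomial

section Quadratic

variable {R : Type*} [CommRing R]

theorem isUnit_of_dvd_C_mul_X_sq_sub_C {a c : R} (hac : IsRelPrime a c) {g : R[X]}
    (hg : g ∣ C a * X ^ 2 - C c) (hdeg : g.natDegree = 0) : IsUnit g := by
  rw [eq_C_of_natDegree_eq_zero hdeg, C_dvd_iff_dvd_coeff] at hg
  rw [eq_C_of_natDegree_eq_zero hdeg]
  refine isUnit_C.mpr (hac ?_ ?_)
  · simpa using hg 2
  · simpa using hg 0

variable [IsDomain R]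

theorem irreducible_C_mul_X_sq_sub_C {a c : R} (hac : IsRelPrime a c)
    (hsq : ¬ IsSquare (a * c)) : Irreducible (C a * X ^ 2 - C c) := by
  have ha : a ≠ 0 := by rintro rfl; exact hsq ⟨0, by simp⟩
  have hdeg : (C a * X ^ 2 - C c).natDegree = 2 := by compute_degree!
  refine ⟨fun hu ↦ by simpa [hdeg] using natDegree_eq_zero_of_isUnit hu, fun g h hf ↦ ?_⟩
  have hgh : g.natDegree + h.natDegree = 2 := by
    rw [← hdeg, hf, natDegree_mul] <;> rintro rfl <;> simp_all
  by_contra! ⟨hg, hh⟩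
  have hg0 : g.natDegree ≠ 0 := mt (isUnit_of_dvd_C_mul_X_sq_sub_C hac (Dvd.intro h hf.symm)) hg
  have hh0 : h.natDegree ≠ 0 :=
    mt (isUnit_of_dvd_C_mul_X_sq_sub_C hac (Dvd.intro_left g hf.symm)) hh
  set p := g.coeff 1
  set q := g.coeff 0
  set r := h.coeff 1
  set s := h.coeff 0
  have hprod : (C p * X + C q) * (C r * X + C s) =
      C (p * r) * X ^ 2 + C (p * s + q * r) * X + C (q * s) := by
    simp only [map_mul, map_add]
    ring
  rw [eq_X_add_C_of_natDegree_le_one (by omega : g.natDegree ≤ 1),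
    eq_X_add_C_of_natDegree_le_one (by omega : h.natDegree ≤ 1), hprod] at hf
  have h2 := congrArg (coeff · 2) hf
  have h1 := congrArg (coeff · 1) hf
  have h0 := congrArg (coeff · 0) hf
  simp [coeff_X, coeff_C, -map_mul] at h2 h1 h0
  exact hsq ⟨p * s, by linear_combination c * h2 - p * r * h0 + p * s * h1⟩

theorem not_isSquare_of_isRoot_of_eval_derivative_ne_zero {f : R[X]} {r : R} (hroot : f.IsRoot r)
    (hsimple : f.derivative.eval r ≠ 0) : ¬ IsSquare f := by
  rintro ⟨s, rfl⟩
  have hs : s.eval r = 0 := by simpa using hroot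
  simp [hs] at hsimple

theorem not_isSquare_comp_mul {A q c : R[X]} {y : R} (hA : A.IsRoot (q.eval y))
    (hA' : A.derivative.eval (q.eval y) ≠ 0) (hq' : q.derivative.eval y ≠ 0)
    (hc : c.eval y ≠ 0) : ¬ IsSquare (A.comp q * c) :=
  not_isSquare_of_isRoot_of_eval_derivative_ne_zero (r := y) (by simp [hA.eq_zero])
    (by simp [derivative_mul, derivative_comp, hA.eq_zero, hA', hq', hc])

end Quadratic

namespace Chebyshev

theorem eq_S_of_recurrence_s19 {R : Type*} [CommRing R] {P : ℤ → R[X]} (h0 : P 0 = 1)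
    (h1 : P 1 = X) (hP : ∀ n, P (n + 1) = X * P n - P (n - 1)) : P = S R := by
  funext n
  induction n using Polynomial.Chebyshev.induct with
  | zero => rw [h0, S_zero]
  | one => rw [h1, S_one]
  | add_two n ih1 ih0 =>
    linear_combination (norm := ring_nf) hP (n + 1) + X * ih1 - ih0 - S_add_two R n
  | neg_add_one n ih0 ih1 =>
    linear_combination (norm := ring_nf) hP (-n) - ih1 + X * ih0 - S_sub_one R (-n)

theorem S_sub_S_eq_C (R : Type*) [CommRing R] (n : ℤ) : S R n - S R (n - 2) = C R n := by
  linear_combination -S_eq R n - C_eq_S_sub_X_mul_S R n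

theorem S_sub_S_eval_two (R : Type*) [CommRing R] (n : ℤ) :
    (S R (n - 1) - S R (n - 2)).eval 2 = 1 := by
  simp only [eval_sub, S_eval_two]
  push_cast
  ring

section Field

variable {K : Type*} [Field K] {z : K}

theorem eval_add_inv_of_recurrence {P : ℤ → K[X]} (hP : ∀ n, P (n + 2) = X * P (n + 1) - P n)
    (hz : z ≠ 0) {u α β : K} (h0 : u * (P 0).eval (z + z⁻¹) = α + β)
    (h1 : u * (P 1).eval (z + z⁻¹) = α * z + β * z⁻¹) (n : ℤ) :
    u * (P n).eval (z + z⁻¹) = α * z ^ n + β * z ^ (-n) := by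
  induction n using Polynomial.Chebyshev.induct with
  | zero => simpa using h0
  | one => simpa using h1
  | add_two n ih1 ih0 =>
    rw [hP, eval_sub, eval_mul, eval_X, mul_sub, mul_left_comm, ih1, ih0]
    simp only [neg_add, zpow_add₀ hz, zpow_neg, zpow_one, zpow_two]
    field_simp
    ring
  | neg_add_one n ih0 ih1 =>
    have h : P (-n - 1) = X * P (-n) - P (-n + 1) := by
      linear_combination (norm := ring_nf) hP (-n - 1)
    rw [h, eval_sub, eval_mul, eval_X, mul_sub, mul_left_comm, ih1, ih0]
    simp only [neg_add, neg_sub, neg_neg, zpow_add₀ hz, zpow_sub₀ hz, zpow_neg, zpow_one]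
    field_simp
    ring

theorem add_one_mul_eval_add_inv_S_sub_S (hz : z ≠ 0) (n : ℤ) :
    (z + 1) * (S K (n - 1) - S K (n - 2)).eval (z + z⁻¹) = z ^ n + z * z ^ (-n) := by
  have hrec (m : ℤ) : S K (m + 2 - 1) - S K (m + 2 - 2) =
      X * (S K (m + 1 - 1) - S K (m + 1 - 2)) - (S K (m - 1) - S K (m - 2)) := by
    linear_combination (norm := ring_nf) S_add_one K m - S_add_one K (m - 1)
  simpa only [one_mul] using eval_add_inv_of_recurrence
    (P := fun m ↦ S K (m - 1) - S K (m - 2)) (u := z + 1) (α := 1) (β := z) hrec hz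
    (by simp; ring) (by simp [hz]) n

theorem C_eval_add_inv (hz : z ≠ 0) (n : ℤ) : (C K n).eval (z + z⁻¹) = z ^ n + z ^ (-n) := by
  simpa using eval_add_inv_of_recurrence (u := 1) (α := 1) (β := 1) (C_add_two K) hz
    (by simp; ring) (by simp) n

theorem isCoprime_S_sub_S_C [IsAlgClosed K] [NeZero (2 : K)] (n : ℤ) :
    IsCoprime (S K (n - 1) - S K (n - 2)) (C K n) := by
  rw [isCoprime_iff_aeval_ne_zero_of_isAlgClosed K K]
  intro t
  obtain ⟨z, hz, rfl⟩ := IsAlgClosed.exists_ne_zero_add_inv_eq t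
  by_contra! ⟨hA, hC⟩
  rw [coe_aeval_eq_eval] at hA hC
  have hA' := add_one_mul_eval_add_inv_S_sub_S hz n
  rw [hA, mul_zero] at hA'
  rw [C_eval_add_inv hz] at hC
  have hz1 : z = 1 := by
    have : z ^ (-n) * (z - 1) = 0 := by linear_combination -hA' - hC
    exact sub_eq_zero.mp ((mul_eq_zero.mp this).resolve_left (zpow_ne_zero _ hz))
  subst hz1
  norm_num at hC
  exact two_ne_zero hC

/-- `S_{n-1} - S_{n-2}` is `1` at `2` but `±(2n - 1)` at `-2`, so it is not constant. -/
theorem exists_isRoot_S_sub_S [IsAlgClosed K] [CharZero K] {n : ℤ} (hn : 2 ≤ n) :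
    ∃ t, (S K (n - 1) - S K (n - 2)).IsRoot t := by
  refine IsAlgClosed.exists_root _ fun hdeg ↦ ?_
  have hconst : (S K (n - 1) - S K (n - 2)).eval 2 = (S K (n - 1) - S K (n - 2)).eval (-2) := by
    rw [eq_C_of_degree_eq_zero hdeg, eval_C, eval_C]
  rw [S_sub_S_eval_two, eval_sub, S_eval_neg_two, S_eval_neg_two,
    show n - 1 = n - 2 + 1 by ring, Int.negOnePow_succ] at hconst
  have hint : ((1 : ℤ) : K) = ((-(n - 2).negOnePow * (2 * n - 1) : ℤ) : K) := by
    push_cast at hconst ⊢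
    linear_combination hconst
  have := Int.cast_injective hint
  rcases Int.units_eq_one_or (n - 2).negOnePow with h | h <;>
    simp only [h, Units.val_one, Units.val_neg] at this <;> omega

end Field

/-- If `A = S_{n-1} - S_{n-2}` and `A'` both vanished at `z + z⁻¹`, differentiating
`(z + 1) A(z + z⁻¹) = zⁿ + z¹⁻ⁿ` would give `(1 - 2n) z¹⁻ⁿ = 0`. -/
theorem eval_derivative_S_sub_S_ne_zero {n : ℤ} {t : ℂ}
    (ht : (S ℂ (n - 1) - S ℂ (n - 2)).IsRoot t) :
    (derivative (S ℂ (n - 1) - S ℂ (n - 2))).eval t ≠ 0 := by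
  set A := S ℂ (n - 1) - S ℂ (n - 2)
  obtain ⟨z, hz, rfl⟩ := IsAlgClosed.exists_ne_zero_add_inv_eq t
  intro hA'
  have hid : (fun w ↦ (w + 1) * A.eval (w + w⁻¹)) =ᶠ[𝓝 z] fun w ↦ w ^ n + w * w ^ (-n) :=
    (eventually_ne_nhds hz).mono fun w hw ↦ add_one_mul_eval_add_inv_S_sub_S hw n
  have hL : HasDerivAt (fun w ↦ (w + 1) * A.eval (w + w⁻¹))
      (1 * A.eval (z + z⁻¹) + (z + 1) * (A.derivative.eval (z + z⁻¹) * (1 + -(z ^ 2)⁻¹))) z :=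
    ((hasDerivAt_id z).add_const 1).mul
      ((A.hasDerivAt _).comp z ((hasDerivAt_id z).add (hasDerivAt_inv hz)))
  have hR : HasDerivAt (fun w ↦ w ^ n + w * w ^ (-n))
      (n * z ^ (n - 1) + (1 * z ^ (-n) + z * ((-n : ℤ) * z ^ (-n - 1)))) z :=
    (hasDerivAt_zpow n z (.inl hz)).add ((hasDerivAt_id z).mul (hasDerivAt_zpow (-n) z (.inl hz)))
  have hderiv := hL.unique (hR.congr_of_eventuallyEq hid)
  have hroot := add_one_mul_eval_add_inv_S_sub_S hz n
  rw [ht.eq_zero] at hroot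
  rw [ht.eq_zero, hA', zpow_sub_one₀ hz, zpow_sub_one₀ hz] at hderiv
  push_cast at hderiv
  have hodd : ((1 - 2 * n : ℤ) : ℂ) * (z * z ^ (-n)) = 0 := by
    push_cast
    linear_combination
      (-z) * hderiv + n * hroot - (n * z ^ n - n * z * z ^ (-n)) * mul_inv_cancel₀ hz
  have : (1 - 2 * n : ℤ) = 0 := by
    exact_mod_cast (mul_eq_zero.mp hodd).resolve_right (mul_ne_zero hz (zpow_ne_zero _ hz))
  omega

end Chebyshev

end Polynomial

noncomputable def bivariateEquiv (R : Type*) [CommRing R] :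
    MvPolynomial (Fin 2) R ≃ₐ[R] R[X][X] :=
  (MvPolynomial.finSuccEquiv R 1).trans (mapAlgEquiv (MvPolynomial.uniqueAlgEquiv R (Fin 1)))

section Bivariate

variable (R : Type*) [CommRing R]

theorem bivariateEquiv_X_zero : bivariateEquiv R (MvPolynomial.X 0) = X := by
  rw [bivariateEquiv, AlgEquiv.trans_apply, MvPolynomial.finSuccEquiv_X_zero, coe_mapAlgEquiv,
    map_X]

theorem bivariateEquiv_X_one : bivariateEquiv R (MvPolynomial.X 1) = C X := by
  rw [bivariateEquiv, AlgEquiv.trans_apply, ← Fin.succ_zero_eq_one,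
    MvPolynomial.finSuccEquiv_X_succ, coe_mapAlgEquiv, map_C]
  simp

theorem aeval_C_eq_C_comp (p q : R[X]) : aeval (C q) p = C (p.comp q) := by
  rw [comp_eq_aeval, ← algebraMap_eq (R := R[X]), aeval_algebraMap_apply]

end Bivariate

theorem not_isSquare_S_sub_S_comp_mul {n : ℤ} (hn : 2 ≤ n) :
    ¬ IsSquare ((Chebyshev.S ℂ (n - 1) - Chebyshev.S ℂ (n - 2)).comp (4 * X ^ 2 + 2) *
      ((Chebyshev.S ℂ (n - 1) - Chebyshev.S ℂ (n - 2)).comp (4 * X ^ 2 + 2) * X ^ 2 +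
        2 * (Chebyshev.C ℂ n).comp (4 * X ^ 2 + 2))) := by
  set q : ℂ[X] := 4 * X ^ 2 + 2
  set A := Chebyshev.S ℂ (n - 1) - Chebyshev.S ℂ (n - 2)
  obtain ⟨t, ht⟩ := Chebyshev.exists_isRoot_S_sub_S (K := ℂ) hn
  have htA : A.eval t = 0 := ht
  obtain ⟨y, hy⟩ := IsAlgClosed.exists_pow_nat_eq ((t - 2) / 4) Nat.zero_lt_two
  have hqy : q.eval y = t := by
    simp [q, hy]
    ring
  have hy0 : y ≠ 0 := by
    rintro rfl
    have h2 : t = 2 := by simpa [q] using hqy.symm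
    rw [h2, Chebyshev.S_sub_S_eval_two] at htA
    exact one_ne_zero htA
  have hCt : (Chebyshev.C ℂ n).eval t ≠ 0 := by
    have := aeval_ne_zero_of_isCoprime (Chebyshev.isCoprime_S_sub_S_C (K := ℂ) n) t
    rw [coe_aeval_eq_eval] at this
    exact this.resolve_left (not_not.mpr htA)
  refine not_isSquare_comp_mul (by rwa [hqy])
    (by rw [hqy]; exact Chebyshev.eval_derivative_S_sub_S_ne_zero ht) (by simp [q, hy0]) ?_
  simp [hqy, htA, hCt]

theorem irreducible_C_mul_X_sq_sub_C_S_sub_S_comp {n : ℤ} (hn : 1 ≤ n) :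
    Irreducible
      (C ((Chebyshev.S ℂ (n - 1) - Chebyshev.S ℂ (n - 2)).comp (4 * X ^ 2 + 2)) * X ^ 2 -
        C ((Chebyshev.S ℂ (n - 1) - Chebyshev.S ℂ (n - 2)).comp (4 * X ^ 2 + 2) * X ^ 2 +
          2 * (Chebyshev.C ℂ n).comp (4 * X ^ 2 + 2))) := by
  set q : ℂ[X] := 4 * X ^ 2 + 2
  set A := Chebyshev.S ℂ (n - 1) - Chebyshev.S ℂ (n - 2)
  have hcop : IsCoprime (A.comp q) ((Chebyshev.C ℂ n).comp q) :=
    (Chebyshev.isCoprime_S_sub_S_C n).map (compRingHom q)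
  have htwo : IsUnit (2 : ℂ[X]) := by simpa only [map_ofNat] using (two_ne_zero' ℂ).isUnit.map C
  refine irreducible_C_mul_X_sq_sub_C ?_ ?_
  · exact (IsCoprime.mul_add_left_right_iff.mpr
      ((isCoprime_mul_unit_left_right htwo _ _).mpr hcop)).isRelPrime
  obtain rfl | hn2 := hn.eq_or_lt
  · have hprod : A.comp q * (A.comp q * X ^ 2 + 2 * (Chebyshev.C ℂ 1).comp q) =
        9 * X ^ 2 + 4 := by
      simp [A, q]
      ring
    rw [hprod]
    exact not_isSquare_of_isRoot_of_eval_derivative_ne_zero (r := 2 * Complex.I / 3)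
      (by norm_num [div_pow, mul_pow]) (by simp)
  exact not_isSquare_S_sub_S_comp_mul (by omega)

open MvPolynomial in
theorem stmt_19 (S : ℤ → Polynomial ℂ) (hS0 : S 0 = 1) (hS1 : S 1 = Polynomial.X)
    (hS : ∀ k : ℤ, S (k + 1) = Polynomial.X * S k - S (k - 1))
    (n : ℤ) (hn : 1 ≤ n)
    (x y δ : MvPolynomial (Fin 2) ℂ) (hx : x = X 0) (hy : y = X 1)
    (hδ : δ = 4 * y ^ 2 + 2)
    (R : MvPolynomial (Fin 2) ℂ)
    (hR : R = (x ^ 2 - y ^ 2) * (Polynomial.aeval δ (S (n - 1)) - Polynomial.aeval δ (S (n - 2)))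
      - 2 * (Polynomial.aeval δ (S n) - Polynomial.aeval δ (S (n - 2)))) :
    Irreducible R := by
  obtain rfl : S = Chebyshev.S ℂ := Chebyshev.eq_S_of_recurrence_s19 hS0 hS1 hS
  subst hx hy hδ hR
  rw [← MulEquiv.irreducible_iff (bivariateEquiv ℂ)]
  convert irreducible_C_mul_X_sq_sub_C_S_sub_S_comp hn using 1
  have haeval (p : ℂ[X]) : bivariateEquiv ℂ (Polynomial.aeval (4 * X 1 ^ 2 + 2) p) =
      Polynomial.C (p.comp (4 * Polynomial.X ^ 2 + 2)) := by
    rw [← aeval_algHom_apply, map_add, map_mul, map_pow, bivariateEquiv_X_one, map_ofNat,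
      map_ofNat, ← aeval_C_eq_C_comp]
    simp only [map_add, map_mul, map_pow, map_ofNat]
  simp only [map_add, map_sub, map_mul, map_pow, map_ofNat, bivariateEquiv_X_zero,
    bivariateEquiv_X_one, haeval, ← Chebyshev.S_sub_S_eq_C, sub_comp]
  ring
end
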